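/- arXiv:1310.8587 — 6 statements merged into one kernel-verified Lean document; each statement's English description precedes it below -/
import Mathlib

section
/- For every α, β, γ ∈ 𝔽_q (q a prime power) there exist matrices A, B, C ∈ SL₂(𝔽_q) with tr(A) = α, tr(B) = β, tr(C) = γ, and A·B·C = 1. -/
/-!
Given `A, B ∈ SL₂` with `tr A = α`, `tr B = β` and `tr (A B) = γ`, the triple `A, B, (A B)⁻¹`
works, since `tr S⁻¹ = tr S` on `SL₂`. Taking `A` to be the companion matrix of `X² - α X + 1`,
the matrices `B` with `tr B = β` and `tr (A B) = γ` are parametrized by the points of the conic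
`p² + α p q + q² - β p - γ q + 1 = 0`. Over a finite field this conic has a point unless
`A` could have been taken scalar, `α = 2c` with `c² = 1` and `γ = c β`: in odd characteristic
by completing the square in `q` and writing the discriminant as a square (every element of a
finite field of odd order is a sum of two quadratic values), in characteristic `2` because every
element is a square.
-/

open Matrix Polynomial
open scoped MatrixGroups

section Conic

variable {F : Type*} [Field F]

lemma exists_conic_point_of_two_mul_of_ne {α β γ c : F} (hc : c ^ 2 = 1) (hα : α = 2 * c)
    (hγ : γ ≠ c * β) : ∃ p q : F, p ^ 2 + α * p * q + q ^ 2 - β * p - γ * q + 1 = 0 := by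
  have hne : γ - c * β ≠ 0 := sub_ne_zero.mpr hγ
  refine ⟨-c / (γ - c * β), 1 / (γ - c * β), ?_⟩
  rw [hα]
  field_simp
  linear_combination -hc

variable [Fintype F] {α β γ : F}

lemma exists_conic_point_of_ringChar_ne_two (hF : ringChar F ≠ 2) (hα : α ^ 2 ≠ 4) :
    ∃ p q : F, p ^ 2 + α * p * q + q ^ 2 - β * p - γ * q + 1 = 0 := by
  have h2 : (2 : F) ≠ 0 := Ring.two_ne_zero hF
  -- `4 (p² + α p q + q² - β p - γ q + 1) = (2 q + α p - γ)² - D p`, with `D` below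
  let D : F[X] := C (α ^ 2 - 4) * X ^ 2 + C (4 * β - 2 * α * γ) * X + C (γ ^ 2 - 4)
  obtain ⟨y, p, hyp⟩ := FiniteField.exists_root_sum_quadratic (f := X ^ 2) (g := -D)
    (degree_X_pow 2) (by rw [degree_neg, degree_quadratic (sub_ne_zero.mpr hα)])
    (FiniteField.odd_card_of_char_ne_two hF)
  refine ⟨p, (y - α * p + γ) / 2, ?_⟩
  simp only [D, eval_neg, eval_add, eval_mul, eval_pow, eval_C, eval_X] at hyp
  field_simp
  linear_combination hyp

lemma exists_conic_point_of_ringChar_eq_two (hF : ringChar F = 2) (hα : α ≠ 0) :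
    ∃ p q : F, p ^ 2 + α * p * q + q ^ 2 - β * p - γ * q + 1 = 0 := by
  obtain ⟨q, hq⟩ := FiniteField.isSquare_of_char_two hF (-((γ / α) ^ 2 - β * (γ / α) + 1))
  refine ⟨γ / α, q, ?_⟩
  have hαp : α * (γ / α) = γ := mul_div_cancel₀ γ hα
  linear_combination -hq + q * hαp

lemma exists_conic_point_of_forall_ne_two_mul (h : ∀ c : F, c ^ 2 = 1 → α ≠ 2 * c) :
    ∃ p q : F, p ^ 2 + α * p * q + q ^ 2 - β * p - γ * q + 1 = 0 := by
  by_cases hF : ringChar F = 2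
  · have : CharP F 2 := ringChar.of_eq hF
    exact exists_conic_point_of_ringChar_eq_two hF
      (by simpa [CharTwo.two_eq_zero] using h 1 (one_pow 2))
  · have h2 : (2 : F) ≠ 0 := Ring.two_ne_zero hF
    refine exists_conic_point_of_ringChar_ne_two hF fun hα => h (α / 2) ?_ ?_
    · field_simp
      linear_combination hα
    · field_simp

end Conic

namespace Matrix.SpecialLinearGroup

variable {R : Type*} [CommRing R]

lemma trace_inv_fin_two (S : SL(2, R)) :
    trace ((S⁻¹ : SL(2, R)) : Matrix (Fin 2) (Fin 2) R) = trace (S : Matrix (Fin 2) (Fin 2) R) := by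
  rw [coe_inv, adjugate_fin_two, trace_fin_two, trace_fin_two]
  simp [add_comm]

def companionFinTwo (t : R) : SL(2, R) :=
  ⟨!![t, -1; 1, 0], by simp [det_fin_two_of]⟩

@[simp]
lemma coe_companionFinTwo (t : R) :
    (companionFinTwo t : Matrix (Fin 2) (Fin 2) R) = !![t, -1; 1, 0] :=
  rfl

lemma exists_trace_trace_trace_mul_of_conic {α β γ : R}
    (h : ∃ p q : R, p ^ 2 + α * p * q + q ^ 2 - β * p - γ * q + 1 = 0) :
    ∃ A B : SL(2, R), trace (A : Matrix (Fin 2) (Fin 2) R) = α ∧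
      trace (B : Matrix (Fin 2) (Fin 2) R) = β ∧
      trace ((A * B : SL(2, R)) : Matrix (Fin 2) (Fin 2) R) = γ := by
  obtain ⟨p, q, hpq⟩ := h
  let B : SL(2, R) :=
    ⟨!![p, q; α * p + q - γ, β - p], by rw [det_fin_two_of]; linear_combination -hpq⟩
  refine ⟨companionFinTwo α, B, ?_, ?_, ?_⟩
  · simp [trace_fin_two_of]
  · simp [B, trace_fin_two_of]
  · rw [coe_mul, coe_companionFinTwo, mul_fin_two, trace_fin_two_of]
    ring

lemma exists_trace_trace_trace_mul_of_sq_eq_one {c : R} (hc : c ^ 2 = 1) (β : R) :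
    ∃ A B : SL(2, R), trace (A : Matrix (Fin 2) (Fin 2) R) = 2 * c ∧
      trace (B : Matrix (Fin 2) (Fin 2) R) = β ∧
      trace ((A * B : SL(2, R)) : Matrix (Fin 2) (Fin 2) R) = c * β := by
  let A : SL(2, R) := ⟨!![c, 0; 0, c], by simp [det_fin_two_of, ← sq, hc]⟩
  refine ⟨A, companionFinTwo β, ?_, ?_, ?_⟩
  · simp only [A, trace_fin_two_of]
    ring
  · simp [trace_fin_two_of]
  · rw [coe_mul, coe_companionFinTwo, mul_fin_two, trace_fin_two_of]
    simp

theorem exists_trace_trace_trace_mul {F : Type*} [Field F] [Fintype F] (α β γ : F) :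
    ∃ A B : SL(2, F), trace (A : Matrix (Fin 2) (Fin 2) F) = α ∧
      trace (B : Matrix (Fin 2) (Fin 2) F) = β ∧
      trace ((A * B : SL(2, F)) : Matrix (Fin 2) (Fin 2) F) = γ := by
  by_cases hscalar : ∃ c : F, c ^ 2 = 1 ∧ α = 2 * c
  · obtain ⟨c, hc, hα⟩ := hscalar
    by_cases hγ : γ = c * β
    · rw [hα, hγ]
      exact exists_trace_trace_trace_mul_of_sq_eq_one hc β
    · exact exists_trace_trace_trace_mul_of_conic (exists_conic_point_of_two_mul_of_ne hc hα hγ)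
  · exact exists_trace_trace_trace_mul_of_conic
      (exists_conic_point_of_forall_ne_two_mul fun c hc hα => hscalar ⟨c, hc, hα⟩)

end Matrix.SpecialLinearGroup

/-- **Macbeath's trace theorem**: for every `α, β, γ` in a finite field `F = 𝔽_q` there exist
matrices `A, B, C ∈ SL₂(𝔽_q)` with `tr A = α`, `tr B = β`, `tr C = γ`, and `A·B·C = 1`. -/
theorem macbeath_trace (F : Type) [Field F] [Fintype F] (α β γ : F) :
    ∃ A B C : Matrix.SpecialLinearGroup (Fin 2) F,
      Matrix.trace (A : Matrix (Fin 2) (Fin 2) F) = α ∧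
      Matrix.trace (B : Matrix (Fin 2) (Fin 2) F) = β ∧
      Matrix.trace (C : Matrix (Fin 2) (Fin 2) F) = γ ∧
      A * B * C = 1 := by
  obtain ⟨A, B, hA, hB, hAB⟩ := SpecialLinearGroup.exists_trace_trace_trace_mul α β γ
  exact ⟨A, B, (A * B)⁻¹, hA, hB, by rwa [SpecialLinearGroup.trace_inv_fin_two], mul_inv_cancel _⟩
end

section
/- If n is a positive integer coprime to 6, then the abelian group Z_n × Z_n admits an unmixed Beauville structure. -/
/-- For `x, y, z` in a group `G`, `Σ(x,y,z)` is the union of the conjugacy classes of all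
powers of `x`, all powers of `y`, and all powers of `z`. -/
def SigmaSet {G : Type*} [Group G] (x y z : G) : Set G :=
  {g | ∃ n : ℕ, IsConj (x ^ n) g ∨ IsConj (y ^ n) g ∨ IsConj (z ^ n) g}

/-- An unmixed Beauville structure for a group `G`: a quadruple `(x₁, y₁; x₂, y₂)` such that,
with `z_i = (x_i y_i)⁻¹`, both pairs generate `G` and
`Σ(x₁,y₁,z₁) ∩ Σ(x₂,y₂,z₂) = {1}`. -/
def IsUnmixedBeauville {G : Type*} [Group G] (x₁ y₁ x₂ y₂ : G) : Prop :=
  Subgroup.closure {x₁, y₁} = ⊤ ∧ Subgroup.closure {x₂, y₂} = ⊤ ∧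
    SigmaSet x₁ y₁ (x₁ * y₁)⁻¹ ∩ SigmaSet x₂ y₂ (x₂ * y₂)⁻¹ = {1}

section aux

variable (n : ℕ)

/-- The element of `Z_n × Z_n` (written multiplicatively) with additive coordinates `(a, b)`. -/
def ee (a b : ZMod n) : Multiplicative (ZMod n) × Multiplicative (ZMod n) :=
  (Multiplicative.ofAdd a, Multiplicative.ofAdd b)

variable {n}

lemma ee_pow (a b : ZMod n) (k : ℕ) :
    ee n a b ^ k = ee n ((k : ZMod n) * a) ((k : ZMod n) * b) := by
  simp [ee, Prod.pow_def, ← ofAdd_nsmul, nsmul_eq_mul]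

lemma ee_mul (a b c d : ZMod n) : ee n a b * ee n c d = ee n (a + c) (b + d) := rfl

lemma ee_inv (a b : ZMod n) : (ee n a b)⁻¹ = ee n (-a) (-b) := rfl

lemma ee_inj {a b c d : ZMod n} (h : ee n a b = ee n c d) : a = c ∧ b = d := by
  simpa [ee, Prod.ext_iff] using h

lemma ee_surj (g : Multiplicative (ZMod n) × Multiplicative (ZMod n)) :
    g = ee n (Multiplicative.toAdd g.1) (Multiplicative.toAdd g.2) := rfl

end aux


/-- If `n` is a positive integer coprime to `6`, then the abelian group `Z_n × Z_n` admits
an unmixed Beauville structure. -/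
theorem zmod_prod_beauville (n : ℕ) (hn : 0 < n) (h : n.Coprime 6) :
    ∃ x₁ y₁ x₂ y₂ : Multiplicative (ZMod n) × Multiplicative (ZMod n),
      IsUnmixedBeauville x₁ y₁ x₂ y₂ := by
  haveI : NeZero n := ⟨hn.ne'⟩
  have h2 : IsUnit (2 : ZMod n) :=
    (ZMod.isUnit_iff_coprime 2 n).mpr (Nat.Coprime.coprime_dvd_left ⟨3, rfl⟩ h.symm)
  have h3 : IsUnit (3 : ZMod n) :=
    (ZMod.isUnit_iff_coprime 3 n).mpr (Nat.Coprime.coprime_dvd_left ⟨2, by ring⟩ h.symm)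
  have c2 : ∀ x : ZMod n, 2 * x = 0 → x = 0 := fun x hx => by
    have := h2.mul_right_eq_zero.mp hx; exact this
  have c3 : ∀ x : ZMod n, 3 * x = 0 → x = 0 := fun x hx => by
    have := h3.mul_right_eq_zero.mp hx; exact this
  have c6 : ∀ x : ZMod n, 6 * x = 0 → x = 0 := fun x hx => by
    apply c2; apply c3; rw [← hx]; ring
  -- key cancellation lemma over ZMod n
  refine ⟨ee n 1 0, ee n 0 1, ee n 1 3, ee n 2 3, ?_, ?_, ?_⟩
  · -- closure of {(1,0),(0,1)}
    rw [eq_top_iff]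
    rintro g -
    rw [ee_surj g]
    set a := Multiplicative.toAdd g.1
    set b := Multiplicative.toAdd g.2
    have : ee n a b = ee n 1 0 ^ a.val * ee n 0 1 ^ b.val := by
      rw [ee_pow, ee_pow, ee_mul]
      simp [ZMod.natCast_val, ZMod.cast_id]
    rw [this]
    exact mul_mem (pow_mem (Subgroup.subset_closure (by simp)) _)
      (pow_mem (Subgroup.subset_closure (by simp)) _)
  · -- closure of {(1,3),(2,3)}
    rw [eq_top_iff]
    rintro g -
    set S := Subgroup.closure ({ee n 1 3, ee n 2 3} :
      Set (Multiplicative (ZMod n) × Multiplicative (ZMod n)))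
    have hx : ee n 1 3 ∈ S := Subgroup.subset_closure (by simp)
    have hy : ee n 2 3 ∈ S := Subgroup.subset_closure (by simp)
    have h10 : ee n 1 0 ∈ S := by
      have : ee n 2 3 * (ee n 1 3)⁻¹ = ee n 1 0 := by
        rw [ee_inv, ee_mul]; norm_num
      exact this ▸ mul_mem hy (inv_mem hx)
    have h03 : ee n 0 3 ∈ S := by
      have : ee n 1 3 * (ee n 1 0)⁻¹ = ee n 0 3 := by
        rw [ee_inv, ee_mul]; norm_num
      exact this ▸ mul_mem hx (inv_mem h10)
    have h01 : ee n 0 1 ∈ S := by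
      obtain ⟨u, hu⟩ := h3.exists_right_inv
      have : ee n 0 3 ^ u.val = ee n 0 1 := by
        rw [ee_pow]
        congr 1
        · ring
        · rw [ZMod.natCast_val, ZMod.cast_id, mul_comm]; exact hu
      exact this ▸ pow_mem h03 _
    rw [ee_surj g]
    set a := Multiplicative.toAdd g.1
    set b := Multiplicative.toAdd g.2
    have : ee n a b = ee n 1 0 ^ a.val * ee n 0 1 ^ b.val := by
      rw [ee_pow, ee_pow, ee_mul]
      simp [ZMod.natCast_val, ZMod.cast_id]
    rw [this]
    exact mul_mem (pow_mem h10 _) (pow_mem h01 _)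
  · -- intersection
    ext g
    simp only [Set.mem_inter_iff, Set.mem_singleton_iff, SigmaSet, Set.mem_setOf_eq,
      isConj_iff_eq]
    constructor
    · rintro ⟨⟨k, hk⟩, ⟨l, hl⟩⟩
      -- normalize the z's
      have z1 : (ee n 1 0 * ee n 0 1)⁻¹ = ee n (-1) (-1) := by
        rw [ee_mul, ee_inv]; norm_num
      have z2 : (ee n 1 3 * ee n 2 3)⁻¹ = ee n (-3) (-6) := by
        rw [ee_mul, ee_inv]; norm_num
      rw [z1] at hk
      rw [z2] at hl
      rw [ee_surj g] at hk hl ⊢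
      set a := Multiplicative.toAdd g.1
      set b := Multiplicative.toAdd g.2
      rw [ee_pow, ee_pow, ee_pow] at hk hl
      set K : ZMod n := (k : ZMod n)
      set L : ZMod n := (l : ZMod n)
      have hone : (1 : Multiplicative (ZMod n) × Multiplicative (ZMod n)) = ee n 0 0 := rfl
      rw [hone]
      have key : a = 0 ∧ b = 0 := by
        rcases hk with hk | hk | hk <;> rcases hl with hl | hl | hl <;>
          obtain ⟨ha, hb⟩ := ee_inj hk <;> obtain ⟨ha', hb'⟩ := ee_inj hl
        · have hL : L = 0 := c3 L (by linear_combination hb' - hb)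
          exact ⟨by linear_combination hL - ha', by linear_combination -hb⟩
        · have hL : L = 0 := c3 L (by linear_combination hb' - hb)
          exact ⟨by linear_combination 2*hL - ha', by linear_combination -hb⟩
        · have hL : L = 0 := c6 L (by linear_combination hb - hb')
          exact ⟨by linear_combination -3*hL - ha', by linear_combination -hb⟩
        · have hL : L = 0 := by linear_combination ha' - ha
          exact ⟨by linear_combination -ha, by linear_combination 3*hL - hb'⟩
        · have hL : L = 0 := c2 L (by linear_combination ha' - ha)
          exact ⟨by linear_combination -ha, by linear_combination 3*hL - hb'⟩
        · have hL : L = 0 := c3 L (by linear_combination ha - ha')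
          exact ⟨by linear_combination -ha, by linear_combination -6*hL - hb'⟩
        · have hL : L = 0 := c2 L (by linear_combination hb' - ha' - hb + ha)
          exact ⟨by linear_combination hL - ha', by linear_combination 3*hL - hb'⟩
        · have hL : L = 0 := by linear_combination hb' - ha' - hb + ha
          exact ⟨by linear_combination 2*hL - ha', by linear_combination 3*hL - hb'⟩
        · have hL : L = 0 := c3 L (by linear_combination ha' - hb' - ha + hb)
          exact ⟨by linear_combination -3*hL - ha', by linear_combination -6*hL - hb'⟩
      rw [key.1, key.2]
    · rintro rfl
      exact ⟨⟨0, Or.inl (by simp)⟩, ⟨0, Or.inl (by simp)⟩⟩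
end

section
/- The alternating group A₅ does not admit an unmixed Beauville structure. -/
/-!
Every generating pair `(x, y)` of `A₅` has one of `x`, `y`, `xy` of order `5`: otherwise all
three have order at most `3`, and a finite check shows that `x` and `y` then leave a nonempty
proper subset of the five points invariant, so they cannot generate the transitive group `A₅`. Since `25 ∤ 60`, the
subgroups of order `5` are the Sylow `5`-subgroups, hence conjugate; so some power of an
element of order `5` from the first structure is conjugate to one from the second, and this
nontrivial element lies in both sets `Σ`.
-/

open Pointwise Subgroup MulAction

section Sylow

variable {G : Type*} [Group G] [Finite G] {p : ℕ} [hp : Fact p.Prime]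

theorem exists_pow_isConj_of_orderOf_eq_prime (hG : ¬ p ^ 2 ∣ Nat.card G) {g h : G}
    (hg : orderOf g = p) (hh : orderOf h = p) : ∃ n : ℕ, IsConj (g ^ n) h := by
  have hfact : (Nat.card G).factorization p = 1 := by
    have hle := (hp.out.pow_dvd_iff_le_factorization (k := 1) Nat.card_pos.ne').1
      (by simpa [hg] using orderOf_dvd_natCard g)
    have hlt := mt (hp.out.pow_dvd_iff_le_factorization Nat.card_pos.ne').2 hG
    omega
  have card_eq {k : G} (hk : orderOf k = p) :
      Nat.card (zpowers k) = p ^ (Nat.card G).factorization p := by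
    rw [Nat.card_zpowers, hk, hfact, pow_one]
  obtain ⟨c, hc⟩ := exists_smul_eq G (Sylow.ofCard _ (card_eq hg)) (Sylow.ofCard _ (card_eq hh))
  have h_mem : h ∈ MulAut.conj c • zpowers g := by
    rw [← Sylow.coe_ofCard _ (card_eq hg), ← Sylow.coe_subgroup_smul, hc]
    exact mem_zpowers h
  rw [mem_pointwise_smul_iff_inv_smul_mem, ← mem_powers_iff_mem_zpowers] at h_mem
  obtain ⟨n, hn⟩ := h_mem
  refine ⟨n, isConj_iff.2 ⟨c, ?_⟩⟩
  simp only at hn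
  simp [hn, mul_assoc]

theorem mem_sigmaSet_of_orderOf_eq_prime (hG : ¬ p ^ 2 ∣ Nat.card G) {x y z g : G}
    (hxyz : orderOf x = p ∨ orderOf y = p ∨ orderOf z = p) (hg : orderOf g = p) :
    g ∈ SigmaSet x y z := by
  rcases hxyz with h | h | h
  · obtain ⟨n, hn⟩ := exists_pow_isConj_of_orderOf_eq_prime hG h hg
    exact ⟨n, .inl hn⟩
  · obtain ⟨n, hn⟩ := exists_pow_isConj_of_orderOf_eq_prime hG h hg
    exact ⟨n, .inr (.inl hn)⟩
  · obtain ⟨n, hn⟩ := exists_pow_isConj_of_orderOf_eq_prime hG h hg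
    exact ⟨n, .inr (.inr hn)⟩

theorem not_isUnmixedBeauville_of_orderOf_eq_prime (hG : ¬ p ^ 2 ∣ Nat.card G)
    (hgen : ∀ x y : G, closure {x, y} = ⊤ →
      orderOf x = p ∨ orderOf y = p ∨ orderOf (x * y) = p)
    (x₁ y₁ x₂ y₂ : G) : ¬ IsUnmixedBeauville x₁ y₁ x₂ y₂ := by
  rintro ⟨h₁, h₂, h_disj⟩
  have hgen' {x y : G} (h : closure {x, y} = ⊤) :
      orderOf x = p ∨ orderOf y = p ∨ orderOf (x * y)⁻¹ = p := by
    rw [orderOf_inv]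
    exact hgen x y h
  obtain ⟨w, hw⟩ : ∃ w : G, orderOf w = p := by
    rcases hgen' h₁ with h | h | h <;> exact ⟨_, h⟩
  have hw_mem : w ∈ SigmaSet x₁ y₁ (x₁ * y₁)⁻¹ ∩ SigmaSet x₂ y₂ (x₂ * y₂)⁻¹ :=
    ⟨mem_sigmaSet_of_orderOf_eq_prime hG (hgen' h₁) hw,
      mem_sigmaSet_of_orderOf_eq_prime hG (hgen' h₂) hw⟩
  rw [h_disj, Set.mem_singleton_iff] at hw_mem
  rw [hw_mem, orderOf_one] at hw
  exact hp.out.one_lt.ne hw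

end Sylow

theorem smul_eq_of_closure_eq_top {G β : Type*} [Group G] [MulAction G β] {S : Set G}
    (hS : closure S = ⊤) {b : β} (hb : ∀ x ∈ S, x • b = b) (g : G) : g • b = b :=
  (closure_le (stabilizer G b)).2 hb (hS ▸ mem_top g)

theorem Finset.eq_empty_or_eq_univ_of_forall_smul_eq {G α : Type*} [SMul G α]
    [IsPretransitive G α] [Fintype α] [DecidableEq α] {s : Finset α}
    (hs : ∀ g : G, g • s = s) : s = ∅ ∨ s = Finset.univ := by
  rw [or_iff_not_imp_left, ← Ne, ← Finset.nonempty_iff_ne_empty, Finset.eq_univ_iff_forall]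
  rintro ⟨a, ha⟩ b
  obtain ⟨g, rfl⟩ := exists_smul_eq G a b
  exact hs g ▸ Finset.smul_mem_smul_finset ha

namespace alternatingGroup

theorem pow_six_eq_one_or_orderOf_eq_five (g : alternatingGroup (Fin 5)) :
    g ^ 6 = 1 ∨ orderOf g = 5 := by
  have h : ∀ g : alternatingGroup (Fin 5), g ^ 6 = 1 ∨ (g ^ 5 = 1 ∧ g ≠ 1) := by decide +kernel
  have : Fact (Nat.Prime 5) := ⟨Nat.prime_five⟩
  exact (h g).imp_right fun h ↦ orderOf_eq_prime h.1 h.2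

set_option maxHeartbeats 2000000 in
theorem exists_invariant_finset_of_pow_six_eq_one {x y : alternatingGroup (Fin 5)}
    (hx : x ^ 6 = 1) (hy : y ^ 6 = 1) (hxy : (x * y) ^ 6 = 1) :
    ∃ s : Finset (Fin 5), s ≠ ∅ ∧ s ≠ Finset.univ ∧ x • s = s ∧ y • s = s := by
  have h : ∀ x : alternatingGroup (Fin 5), x ^ 6 = 1 → ∀ y : alternatingGroup (Fin 5),
      y ^ 6 = 1 → (x * y) ^ 6 = 1 →
      ∃ s : Finset (Fin 5), s ≠ ∅ ∧ s ≠ Finset.univ ∧ x • s = s ∧ y • s = s := by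
    decide +kernel
  exact h x hx y hy hxy

theorem orderOf_eq_five_of_closure_pair_eq_top {x y : alternatingGroup (Fin 5)}
    (h : closure {x, y} = ⊤) : orderOf x = 5 ∨ orderOf y = 5 ∨ orderOf (x * y) = 5 := by
  by_contra! hne
  obtain ⟨s, hs_empty, hs_univ, hx, hy⟩ := exists_invariant_finset_of_pow_six_eq_one
    ((pow_six_eq_one_or_orderOf_eq_five x).resolve_right hne.1)
    ((pow_six_eq_one_or_orderOf_eq_five y).resolve_right hne.2.1)
    ((pow_six_eq_one_or_orderOf_eq_five (x * y)).resolve_right hne.2.2)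
  have : IsPretransitive (alternatingGroup (Fin 5)) (Fin 5) :=
    isPretransitive_of_three_le_card (Fin 5) (by simp)
  have hs := smul_eq_of_closure_eq_top h (b := s) (by rintro g (rfl | rfl) <;> assumption)
  exact (Finset.eq_empty_or_eq_univ_of_forall_smul_eq hs).elim hs_empty hs_univ

end alternatingGroup

/-- The alternating group `A₅` does not admit an unmixed Beauville structure. -/
theorem A5_no_beauville :
    ¬ ∃ x₁ y₁ x₂ y₂ : alternatingGroup (Fin 5), IsUnmixedBeauville x₁ y₁ x₂ y₂ := by
  rintro ⟨x₁, y₁, x₂, y₂, h⟩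
  have : Fact (Nat.Prime 5) := ⟨Nat.prime_five⟩
  have hcard : Nat.card (alternatingGroup (Fin 5)) = 60 := by
    rw [nat_card_alternatingGroup, Nat.card_fin]; rfl
  exact not_isUnmixedBeauville_of_orderOf_eq_prime (p := 5) (by rw [hcard]; norm_num)
    (fun _ _ ↦ alternatingGroup.orderOf_eq_five_of_closure_pair_eq_top) x₁ y₁ x₂ y₂ h
end

section
/- Let q be a prime power and set d = gcd(2, q−1). In SL₂(𝔽_q), a triple (α, β, γ) ∈ 𝔽_q³ is singular, i.e. α² + β² + γ² − αβγ − 4 = 0, whenever there exist A, B ∈ SL₂(𝔽_q) with tr(A) = α, tr(B) = β, tr(AB) = γ such that A and B have a common eigenvector (i.e., generate a group with a common fixed point in its action on the projective line, a 'structural' subgroup). -/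
/-! If `v` is a common eigenvector of `A` and `B`, with eigenvalues `a` and `b`, then it is an
eigenvector of `AB` with eigenvalue `ab`. For a matrix of determinant one, every eigenvalue `λ`
is a root of `X² - tr X + 1`, so `tr = λ + λ⁻¹`. The trace triple is therefore
`(a + a⁻¹, b + b⁻¹, ab + (ab)⁻¹)`, and this satisfies the singularity equation identically. -/

open Matrix

def IsSingular {R : Type*} [CommRing R] (α β γ : R) : Prop :=
  α ^ 2 + β ^ 2 + γ ^ 2 - α * β * γ - 4 = 0

lemma isSingular_map_iff {R S : Type*} [CommRing R] [CommRing S] {f : R →+* S}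
    (hf : Function.Injective f) {α β γ : R} :
    IsSingular (f α) (f β) (f γ) ↔ IsSingular α β γ := by
  unfold IsSingular
  rw [← hf.eq_iff, map_zero]
  simp only [map_sub, map_add, map_mul, map_pow, map_ofNat]

lemma isSingular_add_inv {K : Type*} [Field K] {a b : K} (ha : a ≠ 0) (hb : b ≠ 0) :
    IsSingular (a + a⁻¹) (b + b⁻¹) (a * b + (a * b)⁻¹) := by
  unfold IsSingular
  field_simp
  ring

lemma sq_sub_trace_mul_add_det_eq_zero {R : Type*} [CommRing R] [IsDomain R]
    {M : Matrix (Fin 2) (Fin 2) R} {v : Fin 2 → R} (hv : v ≠ 0) {a : R}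
    (h : M *ᵥ v = a • v) : a ^ 2 - M.trace * a + M.det = 0 := by
  have hsing : (a • (1 : Matrix (Fin 2) (Fin 2) R) - M).det = 0 :=
    exists_mulVec_eq_zero_iff.1 ⟨v, hv, by rw [sub_mulVec, h, smul_mulVec, one_mulVec, sub_self]⟩
  rw [det_fin_two] at hsing
  rw [det_fin_two, trace_fin_two]
  simp only [Matrix.sub_apply, Matrix.smul_apply, one_apply_eq, one_apply_ne, smul_eq_mul, mul_one,
    mul_zero, ne_eq, zero_ne_one, one_ne_zero, not_false_eq_true, zero_sub] at hsing
  linear_combination hsing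

lemma trace_eq_add_inv_of_mulVec_eq_smul {K : Type*} [Field K] {M : Matrix (Fin 2) (Fin 2) K}
    (hM : M.det = 1) {v : Fin 2 → K} (hv : v ≠ 0) {a : K} (h : M *ᵥ v = a • v) :
    a ≠ 0 ∧ M.trace = a + a⁻¹ := by
  have hchar := sq_sub_trace_mul_add_det_eq_zero hv h
  rw [hM] at hchar
  have ha : a ≠ 0 := by rintro rfl; simp at hchar
  refine ⟨ha, ?_⟩
  field_simp
  linear_combination -hchar

lemma isSingular_trace_of_mulVec_eq_smul {K : Type*} [Field K] {M N : Matrix (Fin 2) (Fin 2) K}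
    (hM : M.det = 1) (hN : N.det = 1) {v : Fin 2 → K} (hv : v ≠ 0) {a b : K}
    (hMv : M *ᵥ v = a • v) (hNv : N *ᵥ v = b • v) :
    IsSingular M.trace N.trace (M * N).trace := by
  have hMNv : (M * N) *ᵥ v = (a * b) • v := by
    rw [← mulVec_mulVec, hNv, mulVec_smul, hMv, smul_smul, mul_comm]
  obtain ⟨ha, htrM⟩ := trace_eq_add_inv_of_mulVec_eq_smul hM hv hMv
  obtain ⟨hb, htrN⟩ := trace_eq_add_inv_of_mulVec_eq_smul hN hv hNv
  obtain ⟨-, htrMN⟩ := trace_eq_add_inv_of_mulVec_eq_smul (by rw [det_mul, hM, hN, one_mul]) hv hMNv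
  rw [htrM, htrN, htrMN]
  exact isSingular_add_inv ha hb

theorem singular_of_common_eigenvector_general (F : Type) [Field F]
    (K : Type) [Field K] (φ : F →+* K)
    (A B : SpecialLinearGroup (Fin 2) F) (v : Fin 2 → K) (hv : v ≠ 0) (a b : K)
    (hA : ((A : Matrix (Fin 2) (Fin 2) F).map φ).mulVec v = a • v)
    (hB : ((B : Matrix (Fin 2) (Fin 2) F).map φ).mulVec v = b • v) :
    (Matrix.trace (A : Matrix (Fin 2) (Fin 2) F)) ^ 2 +
      (Matrix.trace (B : Matrix (Fin 2) (Fin 2) F)) ^ 2 +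
      (Matrix.trace ((A * B : SpecialLinearGroup (Fin 2) F) : Matrix (Fin 2) (Fin 2) F)) ^ 2 -
      Matrix.trace (A : Matrix (Fin 2) (Fin 2) F) *
        Matrix.trace (B : Matrix (Fin 2) (Fin 2) F) *
        Matrix.trace ((A * B : SpecialLinearGroup (Fin 2) F) : Matrix (Fin 2) (Fin 2) F) -
      4 = 0 := by
  have h := isSingular_trace_of_mulVec_eq_smul (SpecialLinearGroup.map φ A).2
    (SpecialLinearGroup.map φ B).2 hv hA hB
  simp only [SpecialLinearGroup.map_apply_coe, RingHom.mapMatrix_apply, ← Matrix.map_mul,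
    ← AddMonoidHom.map_trace] at h
  exact (isSingular_map_iff φ.injective).1 h

/-- One direction of Macbeath's Theorem 2: if `A, B ∈ SL₂(𝔽_q)` have a common eigenvector
(over any field extension `K` of `𝔽_q`, e.g. the algebraic closure, so that the subgroup
generated by their images is structural), then the trace triple
`(α, β, γ) = (tr A, tr B, tr AB)` is singular: `α² + β² + γ² − αβγ − 4 = 0`. -/
theorem singular_of_common_eigenvector (F : Type) [Field F] [Fintype F]
    (K : Type) [Field K] (φ : F →+* K)
    (A B : SpecialLinearGroup (Fin 2) F) (v : Fin 2 → K) (hv : v ≠ 0) (a b : K)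
    (hA : ((A : Matrix (Fin 2) (Fin 2) F).map φ).mulVec v = a • v)
    (hB : ((B : Matrix (Fin 2) (Fin 2) F).map φ).mulVec v = b • v) :
    (Matrix.trace (A : Matrix (Fin 2) (Fin 2) F)) ^ 2 +
      (Matrix.trace (B : Matrix (Fin 2) (Fin 2) F)) ^ 2 +
      (Matrix.trace ((A * B : SpecialLinearGroup (Fin 2) F) : Matrix (Fin 2) (Fin 2) F)) ^ 2 -
      Matrix.trace (A : Matrix (Fin 2) (Fin 2) F) *
        Matrix.trace (B : Matrix (Fin 2) (Fin 2) F) *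
        Matrix.trace ((A * B : SpecialLinearGroup (Fin 2) F) : Matrix (Fin 2) (Fin 2) F) -
      4 = 0 :=
  singular_of_common_eigenvector_general F K φ A B v hv a b hA hB
end

section
/- Let G = SL_{r+1}(𝔽_q) with r ≥ 1, and let t₁ ∈ G be an element whose characteristic polynomial is irreducible of degree r+1, and t₂ ∈ G an element whose characteristic polynomial is a product of irreducible polynomials of degrees 1 and r (r ≥ 2). Let T₁, T₂ be the centralizers of t₁, t₂ respectively. Then for all g ∈ G, T₁ ∩ g⁻¹T₂g = Z(G). -/
/-!
If `x` centralizes `t₁` and `g x g⁻¹` centralizes `t₂`, then `g x g⁻¹` preserves the eigenline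
of `t₂` belonging to the simple root of its characteristic polynomial (the irreducible factor of
degree `r ≥ 2` has no root), so `g x g⁻¹`, and with it `x`, has an eigenvalue `μ`. The
`μ`-eigenspace of `x` is a nonzero `t₁`-invariant subspace, and an endomorphism with irreducible
characteristic polynomial has no invariant subspaces besides `0` and the whole space; hence
`x = μ`.
-/

open Matrix Polynomial Module

namespace Polynomial

theorem exists_rootMultiplicity_mul_eq_one {K : Type*} [Field K] {p q : K[X]}
    (hp : p.natDegree = 1) (hq : Irreducible q) (hq₁ : q.natDegree ≠ 1) :
    ∃ a, (p * q).rootMultiplicity a = 1 := by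
  classical
  have hp₀ : p ≠ 0 := ne_zero_of_natDegree_gt (n := 0) (by omega)
  obtain ⟨a, ha⟩ := exists_root_of_degree_eq_one (degree_eq_iff_natDegree_eq hp₀ |>.mpr hp)
  refine ⟨a, ?_⟩
  have hle : p.rootMultiplicity a ≤ 1 :=
    hp ▸ (count_roots p).symm.le.trans ((Multiset.count_le_card _ _).trans (card_roots' p))
  have hpos : 0 < p.rootMultiplicity a := (rootMultiplicity_pos hp₀).mpr ha
  rw [rootMultiplicity_mul (mul_ne_zero hp₀ hq.ne_zero),
    rootMultiplicity_eq_zero (hq.not_isRoot_of_natDegree_ne_one hq₁)]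
  omega

end Polynomial

namespace Module.End

variable {K V : Type*} [Field K] [AddCommGroup V] [Module K V]

theorem aeval_restrict_apply (f : End K V) {W : Submodule K V} (hW : ∀ x ∈ W, f x ∈ W)
    (p : K[X]) (w : W) : (aeval (f.restrict hW) p w : V) = aeval f p w := by
  induction p using Polynomial.induction_on' with
  | add p q hp hq => simp [hp, hq]
  | monomial k c =>
    simp only [aeval_monomial, mul_apply, Module.algebraMap_end_apply]
    rw [pow_restrict]
    rfl

variable [FiniteDimensional K V]

theorem eq_top_of_irreducible_charpoly {f : End K V} (hf : Irreducible f.charpoly)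
    {W : Submodule K V} (hW : ∀ x ∈ W, f x ∈ W) (hW₀ : W ≠ ⊥) : W = ⊤ := by
  have : Nontrivial W := Submodule.nontrivial_iff_ne_bot.mpr hW₀
  set g := f.restrict hW
  have hdvd : minpoly K g ∣ f.charpoly := minpoly.dvd K g <| LinearMap.ext fun w =>
    Subtype.ext <| by simp [g, aeval_restrict_apply, LinearMap.aeval_self_charpoly]
  have hassoc : Associated f.charpoly (minpoly K g) :=
    (hf.dvd_iff.mp hdvd).resolve_left (minpoly.not_isUnit K g)
  apply Submodule.eq_top_of_finrank_eq
  refine le_antisymm (Submodule.finrank_le W) ?_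
  calc finrank K V = f.charpoly.natDegree := f.charpoly_natDegree.symm
    _ = (minpoly K g).natDegree :=
      natDegree_eq_of_degree_eq (degree_eq_degree_of_associated hassoc)
    _ ≤ g.charpoly.natDegree :=
      natDegree_le_of_dvd (LinearMap.minpoly_dvd_charpoly g) g.charpoly_monic.ne_zero
    _ = finrank K W := g.charpoly_natDegree

theorem eq_algebraMap_of_commute_of_irreducible_charpoly {f g : End K V}
    (hf : Irreducible f.charpoly) (hfg : Commute f g) {μ : K} (hμ : g.HasEigenvalue μ) :
    g = algebraMap K (End K V) μ := by
  have htop : g.eigenspace μ = ⊤ :=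
    eq_top_of_irreducible_charpoly hf (fun x hx => mapsTo_genEigenspace_of_comm hfg.symm μ 1 hx)
      (hasEigenvalue_iff.mp hμ)
  ext v
  simpa using mem_eigenspace_iff.mp (htop ▸ Submodule.mem_top : v ∈ g.eigenspace μ)

theorem finrank_eigenspace_eq_one {f : End K V} {a : K}
    (ha : f.charpoly.rootMultiplicity a = 1) : finrank K (f.eigenspace a) = 1 := by
  refine le_antisymm (ha ▸ LinearMap.finrank_eigenspace_le f a) ?_
  have hfa : f.HasEigenvalue a := (hasEigenvalue_iff_isRoot_charpoly f a).mpr <|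
    (rootMultiplicity_pos f.charpoly_monic.ne_zero).mp (by omega)
  have := Submodule.nontrivial_iff_ne_bot.mpr (hasEigenvalue_iff.mp hfa)
  exact Module.finrank_pos

theorem exists_hasEigenvalue_of_commute {f g : End K V} (hfg : Commute f g) {a : K}
    (ha : finrank K (f.eigenspace a) = 1) : ∃ μ, g.HasEigenvalue μ := by
  obtain ⟨v, hv₀, hv⟩ := finrank_eq_one_iff'.mp ha
  obtain ⟨μ, hμ⟩ := hv ⟨g v, mapsTo_genEigenspace_of_comm hfg a 1 v.2⟩
  refine ⟨μ, hasEigenvalue_of_hasEigenvector (x := v) ⟨mem_eigenspace_iff.mpr ?_, ?_⟩⟩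
  · exact (congrArg Subtype.val hμ).symm
  · exact fun h => hv₀ (Subtype.ext h)

end Module.End

namespace Matrix

variable {n K : Type*} [Fintype n] [DecidableEq n] [Field K]

theorem charpoly_toLinAlgEquiv' (A : Matrix n n K) : (toLinAlgEquiv' A).charpoly = A.charpoly :=
  charpoly_toLin' A

theorem eq_scalar_of_commute_of_irreducible_charpoly {A B : Matrix n n K}
    (hA : Irreducible A.charpoly) (hAB : Commute A B) {μ : K} (hμ : B.charpoly.IsRoot μ) :
    B = scalar n μ := by
  have h := Module.End.eq_algebraMap_of_commute_of_irreducible_charpoly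
    (f := toLinAlgEquiv' A) (g := toLinAlgEquiv' B) (by rwa [charpoly_toLinAlgEquiv'])
    (hAB.map toLinAlgEquiv')
    ((Module.End.hasEigenvalue_iff_isRoot_charpoly _ μ).mpr (by rwa [charpoly_toLinAlgEquiv']))
  rw [← AlgEquiv.commutes toLinAlgEquiv'] at h
  rw [toLinAlgEquiv'.injective h, algebraMap_eq_diagonal, scalar_apply]
  rfl

theorem exists_isRoot_charpoly_of_commute {A B : Matrix n n K} {a : K}
    (ha : A.charpoly.rootMultiplicity a = 1) (hAB : Commute A B) : ∃ μ, B.charpoly.IsRoot μ := by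
  obtain ⟨μ, hμ⟩ := Module.End.exists_hasEigenvalue_of_commute (hAB.map toLinAlgEquiv')
    (Module.End.finrank_eigenspace_eq_one (by rwa [charpoly_toLinAlgEquiv']))
  exact ⟨μ, by rwa [Module.End.hasEigenvalue_iff_isRoot_charpoly, charpoly_toLinAlgEquiv'] at hμ⟩

namespace SpecialLinearGroup

variable {R : Type*} [CommRing R]

theorem charpoly_conj (g x : SpecialLinearGroup n R) :
    ((g * x * g⁻¹ : SpecialLinearGroup n R) : Matrix n n R).charpoly =
      (x : Matrix n n R).charpoly := by
  rw [coe_mul, charpoly_mul_comm, ← coe_mul, inv_mul_cancel_left]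

theorem commute_coe_of_mem_centralizer {g x : SpecialLinearGroup n R}
    (hx : x ∈ Subgroup.centralizer {g}) : Commute (g : Matrix n n R) x :=
  (Commute.map (Subgroup.mem_centralizer_singleton_iff.mp hx) coeMonoidHom).symm

theorem mem_center_of_coe_eq_scalar {A : SpecialLinearGroup n R} {μ : R}
    (h : (A : Matrix n n R) = scalar n μ) : A ∈ Subgroup.center (SpecialLinearGroup n R) :=
  mem_center_iff.mpr ⟨μ, by simpa [h] using A.det_coe, h.symm⟩

end SpecialLinearGroup

end Matrix

theorem sl_tori_intersection_general (F : Type) [Field F] (r : ℕ) (hr : 2 ≤ r)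
    (t₁ t₂ : SpecialLinearGroup (Fin (r + 1)) F)
    (h₁ : Irreducible (Matrix.charpoly (t₁ : Matrix (Fin (r + 1)) (Fin (r + 1)) F)))
    (h₂ : ∃ p q : Polynomial F, Irreducible p ∧ Irreducible q ∧
      p.natDegree = 1 ∧ q.natDegree = r ∧
      Matrix.charpoly (t₂ : Matrix (Fin (r + 1)) (Fin (r + 1)) F) = p * q)
    (g : SpecialLinearGroup (Fin (r + 1)) F) :
    Subgroup.centralizer {t₁} ⊓
        (Subgroup.centralizer {t₂}).map (MulAut.conj g⁻¹).toMonoidHom =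
      Subgroup.center (SpecialLinearGroup (Fin (r + 1)) F) := by
  obtain ⟨p, q, -, hq, hp, hqr, hchar⟩ := h₂
  obtain ⟨a, ha⟩ := exists_rootMultiplicity_mul_eq_one hp hq (by omega)
  refine le_antisymm (fun x hx => ?_) fun z hz => ⟨Subgroup.center_le_centralizer _ hz, ?_⟩
  · obtain ⟨hx₁, hx₂⟩ := Subgroup.mem_inf.mp hx
    replace hx₂ : g * x * g⁻¹ ∈ Subgroup.centralizer {t₂} := by
      simpa using Subgroup.mem_map_equiv.mp hx₂
    obtain ⟨μ, hμ⟩ := exists_isRoot_charpoly_of_commute (hchar ▸ ha)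
      (SpecialLinearGroup.commute_coe_of_mem_centralizer hx₂)
    rw [SpecialLinearGroup.charpoly_conj] at hμ
    exact SpecialLinearGroup.mem_center_of_coe_eq_scalar <|
      eq_scalar_of_commute_of_irreducible_charpoly h₁
        (SpecialLinearGroup.commute_coe_of_mem_centralizer hx₁) hμ
  · refine Subgroup.mem_map_equiv.mpr ?_
    simpa [Subgroup.mem_center_iff.mp hz g] using Subgroup.center_le_centralizer _ hz

/-- In `G = SL_{r+1}(𝔽_q)` (`r ≥ 2`), let `t₁` have irreducible characteristic polynomial
(of degree `r+1`) and let the characteristic polynomial of `t₂` be a product of irreducible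
polynomials of degrees `1` and `r`. If `T₁, T₂` are the centralizers of `t₁, t₂`, then for
all `g ∈ G` we have `T₁ ∩ g⁻¹T₂g = Z(G)`. -/
theorem sl_tori_intersection (F : Type) [Field F] [Fintype F] (r : ℕ) (hr : 2 ≤ r)
    (t₁ t₂ : SpecialLinearGroup (Fin (r + 1)) F)
    (h₁ : Irreducible (Matrix.charpoly (t₁ : Matrix (Fin (r + 1)) (Fin (r + 1)) F)))
    (h₂ : ∃ p q : Polynomial F, Irreducible p ∧ Irreducible q ∧
      p.natDegree = 1 ∧ q.natDegree = r ∧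
      Matrix.charpoly (t₂ : Matrix (Fin (r + 1)) (Fin (r + 1)) F) = p * q)
    (g : SpecialLinearGroup (Fin (r + 1)) F) :
    Subgroup.centralizer {t₁} ⊓
        (Subgroup.centralizer {t₂}).map (MulAut.conj g⁻¹).toMonoidHom =
      Subgroup.center (SpecialLinearGroup (Fin (r + 1)) F) :=
  sl_tori_intersection_general F r hr t₁ t₂ h₁ h₂ g
end

section
/- Let G be a finite group with center Z(G). If T₁, T₂ ≤ G satisfy T₁ ∩ g⁻¹T₂g = Z(G) for all g ∈ G, and x₁ ∈ T₁, x₂ ∈ T₂ are elements with all nontrivial powers outside Z(G), then no nontrivial power of x₁ is conjugate in G to a power of x₂. -/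
/-- Let `G` be a finite group and `T₁, T₂ ≤ G` subgroups with `T₁ ∩ g⁻¹T₂g = Z(G)` for all
`g ∈ G`. If `x₁ ∈ T₁` and `x₂ ∈ T₂` are elements all of whose nontrivial powers lie outside
the center, then no nontrivial power of `x₁` is conjugate in `G` to a power of `x₂`. -/
theorem no_conjugate_powers_of_tori (G : Type) [Group G] [Finite G]
    (T₁ T₂ : Subgroup G)
    (h : ∀ g : G, T₁ ⊓ T₂.map (MulAut.conj g⁻¹).toMonoidHom = Subgroup.center G)
    (x₁ x₂ : G) (hx₁ : x₁ ∈ T₁) (hx₂ : x₂ ∈ T₂)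
    (hc₁ : ∀ n : ℕ, x₁ ^ n ≠ 1 → x₁ ^ n ∉ Subgroup.center G)
    (hc₂ : ∀ n : ℕ, x₂ ^ n ≠ 1 → x₂ ^ n ∉ Subgroup.center G) :
    ∀ m n : ℕ, x₁ ^ m ≠ 1 → ¬ IsConj (x₁ ^ m) (x₂ ^ n) := by
  intro m n hne hconj
  obtain ⟨c, hc⟩ := hconj
  set g : G := (c : G) with hg
  have hx : x₁ ^ m ∈ T₁ ⊓ T₂.map (MulAut.conj g⁻¹).toMonoidHom := by
    refine ⟨T₁.pow_mem hx₁ m, ⟨x₂ ^ n, T₂.pow_mem hx₂ n, ?_⟩⟩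
    have h2 : x₂ ^ n = g * x₁ ^ m * g⁻¹ := by
      rw [hc.eq]; group
    simp [MulAut.conj, h2]; group
  rw [h g] at hx
  exact hc₁ m hne hx
end
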